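/- Let σ > 0, d ≥ 6, 2 ≤ s ≤ d/2, and set a* = σ(√(2·log(d-s)) + √(2·log s)) and t = σ·√(2·log d). Then (a* - t)/σ ≥ √(2·log s) - (log 2)/√(log(d/2)) > 0, and ((a* - t)/σ)²/2 ≥ log s - √2·log 2. -/

import Mathlib

/-! Write `(a* - t)/σ = √(2 log(d-s)) + √(2 log s) - √(2 log d)`. Since `d - s ≥ d/2`, the first
term is at least `√(2 log(d/2))`, and by concavity of `√` the tangent bound at `2 log(d/2)` gives
`√(2 log d) = √(2 log(d/2) + 2 log 2) ≤ √(2 log(d/2)) + log 2 / √(log(d/2))`; the two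
`√(2 log(d/2))` cancel. Positivity uses `log(d/2) > 1` (as `d/2 ≥ 3 > e`) and
`√(2 log s) ≥ √(2 log 2) > log 2`. Squaring the lower bound, the cross term is controlled by
`√(2 log s) ≤ √2 · √(log(d/2))`, which holds since `s ≤ d/2`. -/

open Real

lemma Real.sqrt_add_le_sqrt_add_div {x h : ℝ} (hx : 0 < x) (hh : 0 ≤ h) :
    √(x + h) ≤ √x + h / (2 * √x) := by
  have hsx : 0 < √x := sqrt_pos.mpr hx
  rw [sqrt_le_left (by positivity)]
  have hsq : (√x + h / (2 * √x)) ^ 2 = x + h + (h / (2 * √x)) ^ 2 := by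
    field_simp
    rw [sq_sqrt hx.le]
    ring
  rw [hsq]
  nlinarith [sq_nonneg (h / (2 * √x))]

lemma Real.sqrt_two_mul_log_le_sqrt_two_mul_log_half_add {d : ℝ} (hd : 2 < d) :
    √(2 * log d) ≤ √(2 * log (d / 2)) + log 2 / √(log (d / 2)) := by
  have hL : 0 < log (d / 2) := log_pos (by linarith)
  have hlog : 2 * log d = 2 * log (d / 2) + 2 * log 2 := by
    rw [log_div (by positivity) two_ne_zero]
    ring
  calc √(2 * log d)
      ≤ √(2 * log (d / 2)) + 2 * log 2 / (2 * √(2 * log (d / 2))) := by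
        rw [hlog]
        exact sqrt_add_le_sqrt_add_div (by positivity) (by positivity [log_pos one_lt_two])
    _ = √(2 * log (d / 2)) + log 2 / √(2 * log (d / 2)) := by
        rw [mul_div_mul_left _ _ two_ne_zero]
    _ ≤ √(2 * log (d / 2)) + log 2 / √(log (d / 2)) := by
        gcongr
        linarith

lemma Real.one_lt_log_div_two {d : ℝ} (hd : 6 ≤ d) : 1 < log (d / 2) := by
  rw [lt_log_iff_exp_lt (by positivity)]
  linarith [exp_one_lt_d9]

lemma Real.log_two_lt_sqrt_two_mul_log {s : ℝ} (hs : 2 ≤ s) : log 2 < √(2 * log s) := by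
  have h0 : 0 < log 2 := log_pos one_lt_two
  calc log 2 < √(2 * log 2) := by
        rw [lt_sqrt h0.le]
        nlinarith [log_two_lt_d9]
    _ ≤ √(2 * log s) := by
        gcongr

lemma half_sq_sub_le_half_sq_sub_div {b c D : ℝ} (hD : 0 < D) (hc : 0 ≤ c)
    (hbD : b ≤ √2 * D) : b ^ 2 / 2 - √2 * c ≤ (b - c / D) ^ 2 / 2 := by
  have hcross : b * (c / D) ≤ √2 * c := by
    calc b * (c / D) ≤ √2 * D * (c / D) := by gcongr
      _ = √2 * c := by field_simp
  nlinarith [sq_nonneg (c / D)]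

theorem universal_threshold_below_phase_transition (d s : ℕ) (hd : 6 ≤ d)
    (hs : 2 ≤ s) (hsd : (s : ℝ) ≤ (d : ℝ) / 2)
    (σ astar t : ℝ) (hσ : 0 < σ)
    (hastar : astar = σ * (Real.sqrt (2 * Real.log ((d : ℝ) - s))
      + Real.sqrt (2 * Real.log s)))
    (ht : t = σ * Real.sqrt (2 * Real.log d)) :
    Real.sqrt (2 * Real.log s) - Real.log 2 / Real.sqrt (Real.log ((d : ℝ) / 2))
        ≤ (astar - t) / σ
    ∧ 0 < Real.sqrt (2 * Real.log s) - Real.log 2 / Real.sqrt (Real.log ((d : ℝ) / 2))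
    ∧ Real.log s - Real.sqrt 2 * Real.log 2 ≤ ((astar - t) / σ) ^ 2 / 2 := by
  have hd6 : (6 : ℝ) ≤ d := by exact_mod_cast hd
  have hs2 : (2 : ℝ) ≤ s := by exact_mod_cast hs
  have hL : 1 < log ((d : ℝ) / 2) := one_lt_log_div_two hd6
  have hD : 1 < √(log ((d : ℝ) / 2)) := by rwa [lt_sqrt zero_le_one, one_pow]
  have hgap : (astar - t) / σ
      = √(2 * log ((d : ℝ) - s)) + √(2 * log s) - √(2 * log d) := by
    rw [hastar, ht]
    field_simp
  have hfirst : √(2 * log ((d : ℝ) / 2)) ≤ √(2 * log ((d : ℝ) - s)) := by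
    gcongr
    linarith
  have hlower : √(2 * log s) - log 2 / √(log ((d : ℝ) / 2)) ≤ (astar - t) / σ := by
    rw [hgap]
    linarith [sqrt_two_mul_log_le_sqrt_two_mul_log_half_add (by linarith : (2 : ℝ) < d)]
  have hpos : 0 < √(2 * log s) - log 2 / √(log ((d : ℝ) / 2)) := by
    have : log 2 / √(log ((d : ℝ) / 2)) < log 2 :=
      div_lt_self (log_pos one_lt_two) hD
    linarith [log_two_lt_sqrt_two_mul_log hs2]
  refine ⟨hlower, hpos, ?_⟩
  have hB : √(2 * log s) ≤ √2 * √(log ((d : ℝ) / 2)) := by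
    rw [← sqrt_mul zero_le_two]
    gcongr
  have hBsq : √(2 * log s) ^ 2 / 2 = log s := by
    rw [sq_sqrt (by linarith [log_nonneg (by linarith : (1 : ℝ) ≤ s)])]
    ring
  calc log s - √2 * log 2
      = √(2 * log s) ^ 2 / 2 - √2 * log 2 := by rw [hBsq]
    _ ≤ (√(2 * log s) - log 2 / √(log ((d : ℝ) / 2))) ^ 2 / 2 :=
        half_sq_sub_le_half_sq_sub_div (by linarith) (log_pos one_lt_two).le hB
    _ ≤ ((astar - t) / σ) ^ 2 / 2 := by gcongr
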